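/- Epstein's translation from relatedness logic R to classical propositional logic is truth-preserving: given an R-model (v, 𝓡) where v is a Boolean valuation of variables and 𝓡 a reflexive symmetric relation on formulas induced from a relation on variables (𝓡(φ,ψ) holds iff some variable of φ is 𝓡-related to some variable of ψ), define the R-semantics: R-value of p is v(p); ¬, ∧ classical; φ → ψ is true iff (φ materially implies ψ) and 𝓡(φ,ψ). Define T^E recursively: T^E(p)=p, literal on ¬ and ∧, and T^E(φ → ψ) = (T^E(φ) ⊃ T^E(ψ)) ∧ d_{φ,ψ} where d_{φ,ψ} are fresh variables; define the classical valuation v* by v*(p)=v(p) and v*(d_{φ,ψ}) = true iff 𝓡(φ,ψ). Then for every R-formula φ: φ is true in (v, 𝓡) iff T^E(φ) is true under v*. -/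
import Mathlib


/-- Formulas of Epstein's relatedness logic R: variables, ¬, ∧, →. -/
inductive RForm : Type
  | var : ℕ → RForm
  | neg : RForm → RForm
  | and : RForm → RForm → RForm
  | imp : RForm → RForm → RForm

/-- The set of propositional variables occurring in an R-formula. -/
def RForm.vars : RForm → Set ℕ
  | RForm.var n => {n}
  | RForm.neg φ => φ.vars
  | RForm.and φ ψ => φ.vars ∪ ψ.vars
  | RForm.imp φ ψ => φ.vars ∪ ψ.vars

/-- Lifted relatedness relation on formulas. -/
def RRel (R0 : ℕ → ℕ → Prop) (φ ψ : RForm) : Prop :=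
  ∃ p ∈ φ.vars, ∃ q ∈ ψ.vars, R0 p q

/-- Truth of an R-formula in an R-model (v, R0). -/
def RForm.rtrue (v : ℕ → Bool) (R0 : ℕ → ℕ → Prop) : RForm → Prop
  | RForm.var n => v n = true
  | RForm.neg φ => ¬ φ.rtrue v R0
  | RForm.and φ ψ => φ.rtrue v R0 ∧ ψ.rtrue v R0
  | RForm.imp φ ψ => (φ.rtrue v R0 → ψ.rtrue v R0) ∧ RRel R0 φ ψ

/-- CPL-formulas: the variables p_i, the fresh variables d_{φ,ψ}
(indexed by pairs of R-formulas), and ¬, ∧, ⊃. -/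
inductive CForm : Type
  | var : ℕ → CForm
  | dvar : RForm → RForm → CForm
  | neg : CForm → CForm
  | and : CForm → CForm → CForm
  | imp : CForm → CForm → CForm

/-- Classical truth of a CPL-formula under valuations of the p_i and of the
d_{φ,ψ}. -/
def CForm.ctrue (vp : ℕ → Prop) (vd : RForm → RForm → Prop) : CForm → Prop
  | CForm.var n => vp n
  | CForm.dvar φ ψ => vd φ ψ
  | CForm.neg χ => ¬ χ.ctrue vp vd
  | CForm.and χ₁ χ₂ => χ₁.ctrue vp vd ∧ χ₂.ctrue vp vd
  | CForm.imp χ₁ χ₂ => χ₁.ctrue vp vd → χ₂.ctrue vp vd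

/-- Epstein's translation T^E. -/
def epstein : RForm → CForm
  | RForm.var n => CForm.var n
  | RForm.neg φ => CForm.neg (epstein φ)
  | RForm.and φ ψ => CForm.and (epstein φ) (epstein ψ)
  | RForm.imp φ ψ =>
      CForm.and (CForm.imp (epstein φ) (epstein ψ)) (CForm.dvar φ ψ)

/-- Epstein's translation is truth-preserving: φ is true in the
R-model (v, R0) iff T^E(φ) is true under the classical valuation v*
(v* p = v p, v* d_{φ,ψ} = true iff 𝓡(φ,ψ)). -/
theorem statement17
    (v : ℕ → Bool) (R0 : ℕ → ℕ → Prop)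
    (hRefl : ∀ p, R0 p p) (hSymm : ∀ p q, R0 p q → R0 q p)
    (φ : RForm) :
    φ.rtrue v R0 ↔
      (epstein φ).ctrue (fun n => v n = true) (fun χ₁ χ₂ => RRel R0 χ₁ χ₂) := by
  induction φ with
  | var n => simp [RForm.rtrue, epstein, CForm.ctrue]
  | neg φ ih => simp [RForm.rtrue, epstein, CForm.ctrue, ih]
  | and φ ψ ih1 ih2 => simp [RForm.rtrue, epstein, CForm.ctrue, ih1, ih2]
  | imp φ ψ ih1 ih2 => simp [RForm.rtrue, epstein, CForm.ctrue, ih1, ih2]
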